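/- arXiv:1704.05961 — 2 statements merged into one kernel-verified Lean document; each statement's English description precedes it below -/
import Mathlib

section
/- Let $R$ be a one-dimensional Gorenstein local ring with ideals $I=(x)$, $J=(y)$ satisfying $xy=0$, $I\cap J=(0)$, and $I+J=\mathfrak{m}$. Then $\mathfrak{m}^2 = (x^2,y^2) = (x+y)\mathfrak{m}$, and the embedding dimension and multiplicity of $R$ are both 2 (assuming $R$ is not a DVR). -/
open IsLocalRing TrivSqZeroExt Filter

section Preamble

/-- For an `S`-algebra `A`, the dual `Hom_S(A, S)` is an `A`-module via
`(a • f) b = f (a * b)`. -/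
instance dualSMul {S A : Type*} [CommRing S] [CommRing A] [Algebra S A] :
    SMul A (A →ₗ[S] S) :=
  ⟨fun a f => f ∘ₗ LinearMap.mul S A a⟩

instance dualModule {S A : Type*} [CommRing S] [CommRing A] [Algebra S A] :
    Module A (A →ₗ[S] S) where
  smul := (· • ·)
  one_smul f := by ext x; simp [HSMul.hSMul, SMul.smul]
  mul_smul a b f := by ext x; simp [HSMul.hSMul, SMul.smul, mul_assoc, mul_left_comm]
  smul_zero a := rfl
  smul_add a f g := rfl
  add_smul a b f := by ext x; simp [HSMul.hSMul, SMul.smul, add_mul]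
  zero_smul f := by ext x; simp [HSMul.hSMul, SMul.smul]

/-- The minimal number of generators of a module. -/
noncomputable def minGens (A : Type*) [Semiring A] (M : Type*) [AddCommMonoid M]
    [Module A M] : ℕ :=
  sInf {n | ∃ s : Finset M, s.card = n ∧ Submodule.span A (s : Set M) = ⊤}

/-- The minimal number of generators of an ideal. -/
noncomputable def muIdeal {A : Type*} [CommRing A] (I : Ideal A) : ℕ :=
  sInf {n | ∃ s : Finset A, s.card = n ∧ Ideal.span (s : Set A) = I}

/-- The length of a module, as the Krull dimension of its submodule lattice
(`ℕ`-valued; infinite length is sent to `0` by `toNat`, which is irrelevant in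
the finite-length situations where it is used). -/
noncomputable def moduleLength (A : Type*) [CommRing A] (M : Type*) [AddCommGroup M]
    [Module A M] : ℕ :=
  ((Order.krullDim (Submodule A M)).unbotD 0).toNat

/-- `HasHSMultiplicity A 𝔪 M s e` says that the Hilbert–Samuel multiplicity
`e⁰_𝔪(M) = lim s! · ℓ(M/𝔪^{n+1}M)/nˢ` exists and equals `e`. -/
def HasHSMultiplicity (A : Type*) [CommRing A] (𝔪 : Ideal A) (M : Type*)
    [AddCommGroup M] [Module A M] (s e : ℕ) : Prop :=
  Tendsto (fun n : ℕ =>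
      (Nat.factorial s : ℝ) *
        (moduleLength A (M ⧸ ((𝔪 ^ (n + 1)) • (⊤ : Submodule A M))) : ℝ) / (n : ℝ) ^ s)
    atTop (nhds (e : ℝ))

/-- A Cohen–Macaulay local ring: a Noetherian local ring possessing a regular
sequence of nonunits whose length is the Krull dimension. -/
def IsCohenMacaulayLocalRing (A : Type*) [CommRing A] : Prop :=
  IsLocalRing A ∧ IsNoetherianRing A ∧
    ∃ (n : ℕ) (x : Fin n → A), ringKrullDim A = n ∧ (∀ i, ¬IsUnit (x i)) ∧
      RingTheory.Sequence.IsRegular A (List.ofFn x)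

/-- A Gorenstein local ring: a Noetherian local ring possessing a regular system of
parameters-length regular sequence of nonunits generating an irreducible ideal. -/
def IsGorensteinLocalRing (A : Type*) [CommRing A] : Prop :=
  IsLocalRing A ∧ IsNoetherianRing A ∧
    ∃ (n : ℕ) (x : Fin n → A), ringKrullDim A = n ∧ (∀ i, ¬IsUnit (x i)) ∧
      RingTheory.Sequence.IsRegular A (List.ofFn x) ∧
      InfIrred (Ideal.span (Set.range x))

/-- A regular local ring: a Noetherian local ring whose maximal ideal is generated by
`dim` elements. -/
def IsRegularLocalRing' (A : Type*) [CommRing A] : Prop :=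
  IsLocalRing A ∧ IsNoetherianRing A ∧
    ∃ (n : ℕ) (x : Fin n → A), ringKrullDim A = n ∧ (∀ i, ¬IsUnit (x i)) ∧
      (∀ a : A, ¬IsUnit a → a ∈ Ideal.span (Set.range x))

universe u v

/-- A witness that `K` is a canonical module of `A`: a Gorenstein local ring `S` with
`A` a module-finite `S`-algebra of the same dimension, and `K ≅ Hom_S(A, S)` as
`A`-modules. -/
structure CanonicalModuleWitness (A : Type u) [CommRing A] (K : Type v)
    [AddCommGroup K] [Module A K] where
  S : Type u
  [ringS : CommRing S]
  [algS : Algebra S A]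
  gorenstein : IsGorensteinLocalRing S
  finite : Module.Finite S A
  dimEq : ringKrullDim S = ringKrullDim A
  equiv : K ≃ₗ[A] (A →ₗ[S] S)

/-- `K` is a canonical module of `A`. -/
def IsCanonicalModule (A : Type u) [CommRing A] (K : Type v) [AddCommGroup K]
    [Module A K] : Prop :=
  Nonempty (CanonicalModuleWitness A K)

/-- A witness to the almost Gorenstein property: an embedding `A ↪ K_A` into a
canonical module whose cokernel `C` is zero or an Ulrich module
(`μ_A(C) = e⁰_𝔪(C)`, computed with `s = d - 1`). -/
structure AGLWitness (A : Type u) [CommRing A] [IsLocalRing A] where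
  K : Type u
  [addK : AddCommGroup K]
  [modK : Module A K]
  canonical : IsCanonicalModule A K
  emb : A →ₗ[A] K
  inj : Function.Injective emb
  ulrich : Subsingleton (K ⧸ LinearMap.range emb) ∨
    ∃ d e : ℕ, ringKrullDim A = (d : ℕ) ∧
      minGens A (K ⧸ LinearMap.range emb) = e ∧
      HasHSMultiplicity A (maximalIdeal A) (K ⧸ LinearMap.range emb) (d - 1) e

/-- An almost Gorenstein local ring in the sense of Goto–Takahashi–Taniguchi. -/
def IsAlmostGorensteinLocalRing (A : Type u) [CommRing A] : Prop :=
  IsCohenMacaulayLocalRing A ∧ ∃ h : IsLocalRing A, Nonempty (@AGLWitness A _ h)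

/-- A presentation of `R` as a homomorphic image of a regular local ring. -/
structure RegularPresentation (R : Type u) [CommRing R] where
  S : Type u
  [ringS : CommRing S]
  regular : IsRegularLocalRing' S
  π : S →+* R
  surj : Function.Surjective π

/-- `R` is a homomorphic image of a regular local ring. -/
def IsQuotientOfRegularLocal (R : Type u) [CommRing R] : Prop :=
  Nonempty (RegularPresentation R)

/-- A presentation `R ≅ S/[(X) ∩ (Y)]` with `S` regular local of dimension `d + 1`,
`X, Y` part of a regular system of parameters of `S`, and `I` the image of `(X)`. -/
structure GoodPresentation (R : Type u) [CommRing R] (I : Ideal R) (d : ℕ) where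
  S : Type u
  [ringS : CommRing S]
  regular : IsRegularLocalRing' S
  dimS : ringKrullDim S = (d + 1 : ℕ)
  X : S
  Y : S
  partOfRSOP : ∃ z : Fin (d - 1) → S,
    (∀ a ∈ ({X, Y} : Set S) ∪ Set.range z, ¬IsUnit a) ∧
    (∀ a : S, ¬IsUnit a → a ∈ Ideal.span (({X, Y} : Set S) ∪ Set.range z))
  equiv : (S ⧸ (Ideal.span {X} ⊓ Ideal.span {Y})) ≃+* R
  imageI : I = Ideal.span {equiv (Ideal.Quotient.mk _ X)}

end Preamble

/-!
Because `xy = 0`, `𝔪ⁿ = (xⁿ, yⁿ)`; in particular `𝔪² = (x², y²) = (x + y)𝔪`.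
The ring has depth one, and a nonzerodivisor `t ∈ 𝔪 = (x, y)` makes `x + y` a
nonzerodivisor, since `(x) ∩ (y) = 0` splits `a (x + y) = 0` into `ax = ay = 0`.
From `x (x + y)ⁿ = xⁿ⁺¹`, neither `x` nor `y` is nilpotent (both are nonzero, as `𝔪`
is not principal). Hence in the chain
`𝔪ⁿ⁺¹ = (xⁿ⁺¹, yⁿ⁺¹) ⊂ (xⁿ, yⁿ⁺¹) ⊂ ⋯ ⊂ (x, yⁿ⁺¹) ⊂ ⋯ ⊂ (x, y) ⊂ R`
each step adjoins one element killed by `𝔪` and not already present, so all factors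
are simple, `ℓ(R/𝔪ⁿ⁺¹) = 2n + 1`, and `e = 2`.
-/

theorem Module.length_quotient_eq_add_one_of_covBy {R M : Type*} [Ring R] [AddCommGroup M]
    [Module R M] {N N' : Submodule R M} (h : N ⋖ N') :
    Module.length R (M ⧸ N) = Module.length R (M ⧸ N') + 1 := by
  set K := N'.map N.mkQ with hK
  have : IsSimpleModule R K := by
    rw [isSimpleModule_iff_isAtom, ← bot_covBy_iff]
    refine (WCovBy.of_image (Submodule.comapMkQOrderEmbedding N) ?_).covBy_of_lt ?_
    · simpa [Submodule.comapMkQOrderEmbedding_eq, K, Submodule.comap_map_mkQ, h.le] using h.wcovBy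
    · rw [bot_lt_iff_ne_bot, Ne, hK, ← LinearMap.le_ker_iff_map, Submodule.ker_mkQ]
      exact h.lt.not_ge
  rw [Module.length_eq_add_of_exact K.subtype K.mkQ K.injective_subtype K.mkQ_surjective
    (LinearMap.exact_subtype_mkQ K), Module.length_eq_one,
    (Submodule.quotientQuotientEquivQuotient N N' h.le).length_eq, add_comm]

section MulEqZero

variable {R : Type*} [CommRing R] {x y : R}

theorem span_pair_pow_of_mul_eq_zero (hxy : x * y = 0) (n : ℕ) :
    Ideal.span {x, y} ^ (n + 1) = Ideal.span {x ^ (n + 1), y ^ (n + 1)} := by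
  induction n with
  | zero => simp
  | succ n ih =>
    have hx : x ^ (n + 1) * y = 0 := by rw [pow_succ, mul_assoc, hxy, mul_zero]
    have hy : y ^ (n + 1) * x = 0 := by rw [pow_succ, mul_assoc, mul_comm y, hxy, mul_zero]
    rw [pow_succ, ih, Ideal.span_pair_mul_span_pair, hx, hy, ← pow_succ, ← pow_succ,
      Set.insert_comm _ (0 : R), Ideal.span_insert_zero, Set.insert_comm _ (0 : R),
      Ideal.span_insert_zero]

theorem span_singleton_add_mul_span_pair (hxy : x * y = 0) :
    Ideal.span {x + y} * Ideal.span {x, y} = Ideal.span {x ^ 2, y ^ 2} := by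
  rw [Ideal.span_mul_span', Set.singleton_mul, Set.image_pair]
  congr 3 <;> linear_combination hxy

theorem isSMulRegular_add_of_inf_eq_bot (hmeet : Ideal.span {x} ⊓ Ideal.span {y} = ⊥)
    {t : R} (ht : IsSMulRegular R t) (htxy : t ∈ Ideal.span {x, y}) :
    IsSMulRegular R (x + y) := by
  refine isSMulRegular_iff_right_eq_zero_of_smul.2 fun a ha => ?_
  rw [smul_eq_mul] at ha
  have hax : a * x = 0 := by
    rw [← Ideal.mem_bot, ← hmeet]
    refine ⟨Ideal.mem_span_singleton.2 ⟨a, mul_comm a x⟩, ?_⟩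
    rw [show a * x = -(a * y) by linear_combination ha]
    exact neg_mem (Ideal.mem_span_singleton.2 ⟨a, mul_comm a y⟩)
  have hay : a * y = 0 := by linear_combination ha - hax
  obtain ⟨c, d, rfl⟩ := Ideal.mem_span_pair.1 htxy
  exact ht.right_eq_zero_of_smul (by rw [smul_eq_mul]; linear_combination c * hax + d * hay)

theorem not_isNilpotent_of_isSMulRegular_add (hxy : x * y = 0) (hreg : IsSMulRegular R (x + y))
    (hx : x ≠ 0) : ¬IsNilpotent x := by
  have hpow (n : ℕ) : (x + y) ^ n * x = x ^ (n + 1) := by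
    induction n with
    | zero => simp
    | succ n ih => linear_combination (x + y) * ih + x ^ n * hxy
  rintro ⟨n, hn⟩
  refine hx ((hreg.pow n).right_eq_zero_of_smul ?_)
  rw [smul_eq_mul, hpow, pow_succ, hn, zero_mul]

end MulEqZero

namespace IsLocalRing

variable {R : Type*} [CommRing R] [IsLocalRing R]

theorem exists_isSMulRegular_of_isGorensteinLocalRing (h : IsGorensteinLocalRing R)
    (hd : ringKrullDim R ≠ 0) : ∃ t ∈ maximalIdeal R, IsSMulRegular R t := by
  obtain ⟨-, -, n, xs, hn, hnu, hreg, -⟩ := h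
  cases n with
  | zero => exact absurd hn (by simpa using hd)
  | succ n =>
    rw [List.ofFn_succ, RingTheory.Sequence.isRegular_cons_iff] at hreg
    exact ⟨xs 0, (mem_maximalIdeal _).2 (hnu 0), hreg.1⟩

theorem maximalIdeal_covBy_top : maximalIdeal R ⋖ ⊤ :=
  (maximalIdeal.isMaximal R).out.covBy_top

theorem covBy_sup_span_singleton {I : Ideal R} {z : R} (hz : z ∉ I)
    (hmz : ∀ a ∈ maximalIdeal R, a * z ∈ I) : I ⋖ I ⊔ Ideal.span {z} := by
  refine ⟨left_lt_sup.2 (by rwa [Ideal.span_singleton_le_iff_mem]), fun J hIJ hJ => ?_⟩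
  obtain ⟨w, hwJ, hwI⟩ := SetLike.exists_of_lt hIJ
  obtain ⟨i, hi, v, hv, rfl⟩ := Submodule.mem_sup.1 (hJ.le hwJ)
  obtain ⟨a, rfl⟩ := Ideal.mem_span_singleton'.1 hv
  by_cases ha : a ∈ maximalIdeal R
  · exact hwI (add_mem hi (hmz a ha))
  · obtain ⟨u, rfl⟩ := not_not.1 ((mem_maximalIdeal a).not.1 ha)
    refine hJ.not_ge (sup_le hIJ.le ((Ideal.span_singleton_le_iff_mem J).2 ?_))
    rw [show z = ↑u⁻¹ * ((i + u * z) - i) by simp]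
    exact J.mul_mem_left _ (sub_mem hwJ (hIJ.le hi))

variable {x y : R} (hmeet : Ideal.span {x} ⊓ Ideal.span {y} = ⊥)
include hmeet

theorem pow_succ_notMem_span_pair (hx : x ∈ maximalIdeal R) (hnil : ¬IsNilpotent x) (n : ℕ)
    {w : R} (hw : w ∈ Ideal.span {y}) : x ^ (n + 1) ∉ Ideal.span {x ^ (n + 2), w} := by
  intro hmem
  obtain ⟨a, b, hab⟩ := Ideal.mem_span_pair.1 hmem
  have hu : IsUnit (1 - a * x) :=
    isUnit_one_sub_self_of_mem_nonunits _ ((maximalIdeal R).mul_mem_left a hx)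
  have hzero : x ^ (n + 1) * (1 - a * x) = 0 := by
    rw [← Ideal.mem_bot, ← hmeet]
    refine ⟨Ideal.mem_span_singleton.2 ⟨x ^ n * (1 - a * x), by ring⟩, ?_⟩
    rw [show x ^ (n + 1) * (1 - a * x) = b * w by linear_combination -hab]
    exact Ideal.mul_mem_left _ b hw
  exact hnil ⟨n + 1, hu.mul_left_eq_zero.1 hzero⟩

variable (hm : maximalIdeal R = Ideal.span {x, y}) (hxy : x * y = 0)
include hm hxy

theorem span_pow_pair_covBy (hnil : ¬IsNilpotent x) (n : ℕ) {w : R} (hw : w ∈ Ideal.span {y}) :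
    Ideal.span {x ^ (n + 2), w} ⋖ Ideal.span {x ^ (n + 1), w} := by
  have hle : Ideal.span {x ^ (n + 2)} ≤ Ideal.span {x ^ (n + 1)} :=
    Ideal.span_singleton_le_span_singleton.2 (pow_dvd_pow x (n + 1).le_succ)
  have hsup : Ideal.span {x ^ (n + 1), w} =
      Ideal.span {x ^ (n + 2), w} ⊔ Ideal.span {x ^ (n + 1)} := by
    simp only [Ideal.span_insert]
    rw [sup_right_comm, sup_eq_right.2 hle]
  have hx : x ∈ maximalIdeal R := hm ▸ Ideal.subset_span (by simp)
  rw [hsup]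
  refine covBy_sup_span_singleton (pow_succ_notMem_span_pair hmeet hx hnil n hw) fun a ha => ?_
  rw [hm] at ha
  obtain ⟨c, d, rfl⟩ := Ideal.mem_span_pair.1 ha
  rw [show (c * x + d * y) * x ^ (n + 1) = c * x ^ (n + 2) by linear_combination d * x ^ n * hxy]
  exact Ideal.mul_mem_left _ c (Ideal.subset_span (by simp))

theorem length_quotient_span_pow_pair (hnil : ¬IsNilpotent x) {w : R} (hw : w ∈ Ideal.span {y})
    (n : ℕ) :
    Module.length R (R ⧸ Ideal.span {x ^ (n + 1), w}) =
      Module.length R (R ⧸ Ideal.span {x, w}) + n := by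
  induction n with
  | zero => rw [zero_add, pow_one, Nat.cast_zero, add_zero]
  | succ n ih =>
    rw [Module.length_quotient_eq_add_one_of_covBy (span_pow_pair_covBy hmeet hm hxy hnil n hw),
      ih, Nat.cast_succ, add_assoc]

theorem length_quotient_maximalIdeal_pow (hx : ¬IsNilpotent x) (hy : ¬IsNilpotent y) (n : ℕ) :
    Module.length R (R ⧸ maximalIdeal R ^ (n + 1)) = 2 * n + 1 := by
  have hm' : maximalIdeal R = Ideal.span {y, x} := hm.trans Ideal.span_pair_comm
  rw [hm, span_pair_pow_of_mul_eq_zero hxy,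
    length_quotient_span_pow_pair hmeet hm hxy hx
      (Ideal.mem_span_singleton.2 (dvd_pow_self y n.add_one_ne_zero)) n,
    Ideal.span_pair_comm,
    length_quotient_span_pow_pair ((inf_comm _ _).trans hmeet) hm' (by rw [mul_comm, hxy]) hy
      (Ideal.mem_span_singleton_self x) n,
    ← hm', Module.length_quotient_eq_add_one_of_covBy maximalIdeal_covBy_top,
    Module.length_eq_zero, zero_add]
  ring

end IsLocalRing

theorem moduleLength_eq_toNat_length (A M : Type*) [CommRing A] [AddCommGroup M] [Module A M] :
    moduleLength A M = (Module.length A M).toNat := by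
  rw [moduleLength, ← Module.coe_length, WithBot.unbotD_coe]

theorem hasHSMultiplicity_one_of_moduleLength_eq {A M : Type*} [CommRing A] [AddCommGroup M]
    [Module A M] {𝔪 : Ideal A} (e c : ℕ)
    (h : ∀ n : ℕ, moduleLength A (M ⧸ (𝔪 ^ (n + 1)) • (⊤ : Submodule A M)) = e * n + c) :
    HasHSMultiplicity A 𝔪 M 1 e := by
  have hlim : Tendsto (fun n : ℕ => (e : ℝ) + c * (1 / (n : ℝ))) atTop (nhds e) := by
    simpa using (tendsto_one_div_atTop_nhds_zero_nat.const_mul (c : ℝ)).const_add (e : ℝ)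
  refine hlim.congr' ?_
  filter_upwards [eventually_ne_atTop 0] with n hn
  rw [h]
  field_simp
  push_cast
  ring

theorem muIdeal_eq_two {A : Type*} [CommRing A] {I : Ideal A} {a b : A}
    (hI : I = Ideal.span {a, b}) (hprin : ∀ g, I ≠ Ideal.span {g}) : muIdeal I = 2 := by
  classical
  have hab : a ≠ b := by
    rintro rfl
    exact hprin a (by rw [hI, Set.pair_eq_singleton])
  refine le_antisymm (Nat.sInf_le ⟨{a, b}, Finset.card_pair hab, by simp [hI]⟩) ?_
  refine le_csInf ⟨2, {a, b}, Finset.card_pair hab, by simp [hI]⟩ ?_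
  rintro _ ⟨s, rfl, hs⟩
  by_contra! hcard
  obtain ⟨g, hg⟩ := Finset.card_le_one_iff_subset_singleton.1 (Nat.lt_succ_iff.1 hcard)
  rcases Finset.subset_singleton_iff.1 hg with rfl | rfl
  · exact hprin 0 (by simpa using hs.symm)
  · exact hprin g (by simpa using hs.symm)

theorem isRegularLocalRing'_of_maximalIdeal_eq_span_singleton {A : Type*} [CommRing A]
    [IsLocalRing A] [IsNoetherianRing A] (hdim : ringKrullDim A = 1) {g : A}
    (hg : maximalIdeal A = Ideal.span {g}) : IsRegularLocalRing' A := by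
  refine ⟨inferInstance, inferInstance, 1, fun _ => g, by simpa using hdim, fun _ => ?_,
    fun a ha => ?_⟩
  · exact (mem_maximalIdeal g).1 (hg ▸ Ideal.mem_span_singleton_self g)
  · rw [Set.range_const, ← hg]
    exact (mem_maximalIdeal a).2 ha

universe u

theorem square_of_maximalIdeal_general {R : Type u} [CommRing R] [IsLocalRing R]
    (hGor : IsGorensteinLocalRing R) (hdim : ringKrullDim R = 1)
    (hnotreg : ¬IsRegularLocalRing' R)
    (x y : R)
    (hxy : x * y = 0) (hmeet : Ideal.span {x} ⊓ Ideal.span {y} = ⊥)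
    (hjoin : Ideal.span {x} ⊔ Ideal.span {y} = maximalIdeal R) :
    maximalIdeal R ^ 2 = Ideal.span {x ^ 2, y ^ 2} ∧
    maximalIdeal R ^ 2 = Ideal.span {x + y} * maximalIdeal R ∧
    muIdeal (maximalIdeal R) = 2 ∧
    HasHSMultiplicity R (maximalIdeal R) R 1 2 := by
  have hm : maximalIdeal R = Ideal.span {x, y} := by rw [← hjoin, Ideal.span_insert]
  have : IsNoetherianRing R := hGor.2.1
  have hprin (g : R) : maximalIdeal R ≠ Ideal.span {g} := fun hg =>
    hnotreg (isRegularLocalRing'_of_maximalIdeal_eq_span_singleton hdim hg)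
  obtain ⟨t, htm, ht⟩ := exists_isSMulRegular_of_isGorensteinLocalRing hGor (by simp [hdim])
  have hreg := isSMulRegular_add_of_inf_eq_bot hmeet ht (hm ▸ htm)
  have hx : ¬IsNilpotent x := not_isNilpotent_of_isSMulRegular_add hxy hreg fun hx =>
    hprin y (by rw [hm, hx, Ideal.span_insert_zero])
  have hy : ¬IsNilpotent y := not_isNilpotent_of_isSMulRegular_add (by rw [mul_comm, hxy])
    (by rwa [add_comm]) fun hy =>
      hprin x (by rw [hm, hy, Ideal.span_pair_comm, Ideal.span_insert_zero])
  have hsq : maximalIdeal R ^ 2 = Ideal.span {x ^ 2, y ^ 2} := by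
    rw [hm]; exact span_pair_pow_of_mul_eq_zero hxy 1
  refine ⟨hsq, by rw [hsq, hm, span_singleton_add_mul_span_pair hxy], muIdeal_eq_two hm hprin,
    hasHSMultiplicity_one_of_moduleLength_eq 2 1 fun n => ?_⟩
  rw [smul_eq_mul, Ideal.mul_top, moduleLength_eq_toNat_length,
    length_quotient_maximalIdeal_pow hmeet hm hxy hx hy]
  norm_cast

theorem square_of_maximalIdeal {R : Type u} [CommRing R] [IsLocalRing R]
    (hGor : IsGorensteinLocalRing R) (hdim : ringKrullDim R = 1)
    (hres : Infinite (ResidueField R)) (hnotreg : ¬IsRegularLocalRing' R)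
    (x y : R) (hx : x ∈ maximalIdeal R) (hy : y ∈ maximalIdeal R)
    (hxy : x * y = 0) (hmeet : Ideal.span {x} ⊓ Ideal.span {y} = ⊥)
    (hjoin : Ideal.span {x} ⊔ Ideal.span {y} = maximalIdeal R) :
    maximalIdeal R ^ 2 = Ideal.span {x ^ 2, y ^ 2} ∧
    maximalIdeal R ^ 2 = Ideal.span {x + y} * maximalIdeal R ∧
    muIdeal (maximalIdeal R) = 2 ∧
    HasHSMultiplicity R (maximalIdeal R) R 1 2 :=
  square_of_maximalIdeal_general hGor hdim hnotreg x y hxy hmeet hjoin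
end

section
/- Let $(R,\mathfrak{m})$ be a one-dimensional Cohen-Macaulay local ring, not a DVR, which is almost Gorenstein via an exact sequence $0 \to A \xrightarrow{\varphi} \mathrm{K}_A \to C \to 0$ with $\mathfrak{m}C = 0$. Then $\varphi(1) \notin \mathfrak{m}\mathrm{K}_A$. -/
open IsLocalRing TrivSqZeroExt Filter

universe u

section EmbeddingIntoModule

variable {R M : Type*} [CommRing R] [AddCommGroup M] [Module R M] {φ : R →ₗ[R] M}

theorem mul_mem_span_singleton_of_map_eq_smul (hinj : Function.Injective φ) {I : Ideal R}
    (hI : ∀ w ∈ I, ∀ k : M, w • k ∈ LinearMap.range φ) {z w a : R} {k : M} (hw : w ∈ I)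
    (ha : φ a = z • k) : w * a ∈ Ideal.span {z} := by
  obtain ⟨b, hb⟩ := hI w hw k
  have hφ : φ (w * a) = φ (z * b) := by
    rw [← smul_eq_mul, ← smul_eq_mul, map_smul, map_smul, ha, hb, smul_comm]
  exact Ideal.mem_span_singleton'.mpr ⟨b, by rw [hinj hφ, mul_comm]⟩

end EmbeddingIntoModule

section LocalRing

variable {A : Type*} [CommRing A] [IsLocalRing A]

/-- A preimage `a` of `z • k` satisfies `𝔪 a ⊆ (z)`, so `𝔪 = (z)` if `a` is a unit. -/
theorem maximalIdeal_smul_top_le_map_maximalIdeal {K : Type*} [AddCommGroup K] [Module A K]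
    {φ : A →ₗ[A] K} (hinj : Function.Injective φ)
    (hC : ∀ z ∈ maximalIdeal A, ∀ k : K, z • k ∈ LinearMap.range φ)
    (hprin : ¬(maximalIdeal A).IsPrincipal) :
    maximalIdeal A • (⊤ : Submodule A K) ≤ Submodule.map φ (maximalIdeal A) := by
  refine Submodule.smul_le.mpr fun z hz k _ => ?_
  obtain ⟨a, ha⟩ := hC z hz k
  refine ⟨a, ?_, ha⟩
  by_contra ha𝔪
  have hunit : IsUnit a := notMem_maximalIdeal.mp ha𝔪
  refine hprin ⟨z, le_antisymm (fun w hw => ?_) (Ideal.span_singleton_le_iff_mem _ |>.mpr hz)⟩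
  exact (Ideal.mul_unit_mem_iff_mem _ hunit).mp
    (mul_mem_span_singleton_of_map_eq_smul hinj hC hw ha)

theorem isRegularLocalRing'_of_isPrincipal_maximalIdeal [IsNoetherianRing A]
    (hdim : ringKrullDim A = 1) (hprin : (maximalIdeal A).IsPrincipal) :
    IsRegularLocalRing' A := by
  refine ⟨inferInstance, inferInstance, 1, ![hprin.generator], by simp [hdim], ?_, ?_⟩
  · intro i
    fin_cases i
    exact (mem_maximalIdeal _).mp (Submodule.IsPrincipal.generator_mem _)
  · intro b hb
    rw [Matrix.range_cons, Matrix.range_empty, Set.union_empty, Ideal.span,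
      Submodule.IsPrincipal.span_singleton_generator]
    exact (mem_maximalIdeal b).mpr hb

end LocalRing

theorem minimal_generator_of_canonical_general {A : Type u} [CommRing A] [IsLocalRing A]
    (hCM : IsCohenMacaulayLocalRing A) (hdim : ringKrullDim A = 1)
    (hnotreg : ¬IsRegularLocalRing' A)
    (K : Type u) [AddCommGroup K] [Module A K]
    (φ : A →ₗ[A] K) (hinj : Function.Injective φ)
    (hC : ∀ z ∈ maximalIdeal A, ∀ k : K, z • k ∈ LinearMap.range φ) :
    φ 1 ∉ (maximalIdeal A) • (⊤ : Submodule A K) := by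
  have : IsNoetherianRing A := hCM.2.1
  have hprin : ¬(maximalIdeal A).IsPrincipal := fun hprin =>
    hnotreg (isRegularLocalRing'_of_isPrincipal_maximalIdeal hdim hprin)
  intro hmem
  obtain ⟨a, ha𝔪, ha⟩ := maximalIdeal_smul_top_le_map_maximalIdeal hinj hC hprin hmem
  exact (maximalIdeal.isMaximal A).ne_top
    ((Ideal.eq_top_iff_one _).mpr (hinj ha ▸ ha𝔪))

theorem minimal_generator_of_canonical {A : Type u} [CommRing A] [IsLocalRing A]
    (hCM : IsCohenMacaulayLocalRing A) (hdim : ringKrullDim A = 1)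
    (hnotreg : ¬IsRegularLocalRing' A)
    (K : Type u) [AddCommGroup K] [Module A K] (hK : IsCanonicalModule A K)
    (φ : A →ₗ[A] K) (hinj : Function.Injective φ)
    (hC : ∀ z ∈ maximalIdeal A, ∀ k : K, z • k ∈ LinearMap.range φ) :
    φ 1 ∉ (maximalIdeal A) • (⊤ : Submodule A K) :=
  minimal_generator_of_canonical_general hCM hdim hnotreg K φ hinj hC
end
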